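/- There exists a (K_2,S(C_3))-URD(12;7,2) in which the two 3-sun classes on vertex set Z_12 are {(0,4,8;10,2,7), (1,5,9;11,3,6)} and {(2,6,10;8,0,5), (3,7,11;9,1,4)}; that is, these two sets are parallel classes of vertex-disjoint 3-suns in K_12 whose edge sets are pairwise disjoint, and the remaining 42 edges of K_12 can be partitioned into 7 perfect matchings. -/

import Mathlib

open SimpleGraph

/-- The `h`-sun `S(C_h)`: an `h`-cycle on the vertices `Sum.inl i` together with
a pendant edge from each cycle vertex `Sum.inl i` to the pendant vertex `Sum.inr i`. -/
def sunGraph (h : ℕ) : SimpleGraph (Fin h ⊕ Fin h) :=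
  SimpleGraph.fromRel fun u w =>
    (∃ i j : Fin h, u = Sum.inl i ∧ w = Sum.inl j ∧ (i.val + 1) % h = j.val) ∨
    (∃ i : Fin h, u = Sum.inl i ∧ w = Sum.inr i)

/-- `H` is a parallel class of `h`-suns: `H` is the vertex-disjoint union of
copies of the `h`-sun, and every vertex lies in exactly one copy. -/
def IsSunClass (h : ℕ) {V : Type*} (H : SimpleGraph V) : Prop :=
  ∃ (k : ℕ) (φ : Fin k → Fin h ⊕ Fin h → V),
    (∀ x : V, ∃! p : Fin k × (Fin h ⊕ Fin h), φ p.1 p.2 = x) ∧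
    ∀ x y, H.Adj x y ↔ ∃ a u w, (sunGraph h).Adj u w ∧ φ a u = x ∧ φ a w = y

/-- `H` is a parallel class of copies of `K₂`, i.e. a perfect matching:
every vertex is adjacent to exactly one other vertex. -/
def IsMatchingClass {V : Type*} (H : SimpleGraph V) : Prop :=
  ∀ x : V, ∃! y : V, H.Adj x y

/-- A `(K₂, S(C_h))`-URGDD`(r,s)` of the graph `G`: a decomposition of the
edge set of `G` into `r` parallel classes of single edges (perfect matchings)
and `s` parallel classes of `h`-suns. -/
def IsURGDD {V : Type*} (G : SimpleGraph V) (h r s : ℕ) : Prop :=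
  ∃ C : Fin r ⊕ Fin s → SimpleGraph V,
    (∀ i, C i ≤ G) ∧
    (∀ x y, G.Adj x y → ∃! i, (C i).Adj x y) ∧
    (∀ i : Fin r, IsMatchingClass (C (Sum.inl i))) ∧
    (∀ j : Fin s, IsSunClass h (C (Sum.inr j)))

/-- A `(K₂, S(C_h))`-URD`(v;r,s)`: a uniformly resolvable decomposition of the
complete graph `K_v` into `r` perfect matchings and `s` parallel classes of `h`-suns. -/
def IsURD (v h r s : ℕ) : Prop :=
  IsURGDD (⊤ : SimpleGraph (Fin v)) h r s

/-- The 3-sun `(a₁,a₂,a₃; b₁,b₂,b₃)` as a subgraph of `K₁₂`: the triangle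
`(a₁,a₂,a₃)` together with the pendant edges `{a₁,b₁}, {a₂,b₂}, {a₃,b₃}`. -/
def sunBlock (a₁ a₂ a₃ b₁ b₂ b₃ : Fin 12) : SimpleGraph (Fin 12) :=
  SimpleGraph.fromEdgeSet
    {s(a₁, a₂), s(a₂, a₃), s(a₃, a₁), s(a₁, b₁), s(a₂, b₂), s(a₃, b₃)}

/-! Each 3-sun class is the image of two copies of `S(C₃)` under a bijection
`Fin 2 × V(S(C₃)) → Fin 12`, which makes it a parallel class. The seven one-factors are listed
explicitly; that they and the two sun classes cover every edge of `K₁₂` exactly once is a finite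
check. -/

-- Both sides discard loops, so `f` need not be injective.
theorem SimpleGraph.map_fromEdgeSet {V W : Type*} (f : V → W) (s : Set (Sym2 V)) :
    (fromEdgeSet s).map f = fromEdgeSet (Sym2.map f '' s) := by
  ext x y
  simp only [map_adj', fromEdgeSet_adj, Set.mem_image]
  constructor
  · rintro ⟨hxy, u, v, ⟨huv, -⟩, rfl, rfl⟩
    exact ⟨⟨s(u, v), huv, rfl⟩, hxy⟩
  · rintro ⟨⟨e, he, hexy⟩, hxy⟩
    induction e using Sym2.ind with | _ u v => ?_
    rw [Sym2.map_mk, Sym2.eq_iff] at hexy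
    rcases hexy with ⟨rfl, rfl⟩ | ⟨rfl, rfl⟩
    · exact ⟨hxy, u, v, ⟨he, ne_of_apply_ne f hxy⟩, rfl, rfl⟩
    · exact ⟨hxy, v, u, ⟨Sym2.eq_swap ▸ he, ne_of_apply_ne f hxy⟩, rfl, rfl⟩

theorem sunGraph_three :
    sunGraph 3 = fromEdgeSet {s(.inl 0, .inl 1), s(.inl 1, .inl 2), s(.inl 2, .inl 0),
      s(.inl 0, .inr 0), s(.inl 1, .inr 1), s(.inl 2, .inr 2)} := by
  ext u w
  simp only [sunGraph, fromRel_adj, fromEdgeSet_adj, Set.mem_insert_iff, Set.mem_singleton_iff]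
  revert u w
  decide

def sunMap {V : Type*} (a₁ a₂ a₃ b₁ b₂ b₃ : V) : Fin 3 ⊕ Fin 3 → V :=
  Sum.elim ![a₁, a₂, a₃] ![b₁, b₂, b₃]

theorem sunBlock_eq_map (a₁ a₂ a₃ b₁ b₂ b₃ : Fin 12) :
    sunBlock a₁ a₂ a₃ b₁ b₂ b₃ = (sunGraph 3).map (sunMap a₁ a₂ a₃ b₁ b₂ b₃) := by
  simp [sunGraph_three, map_fromEdgeSet, Set.image_insert_eq, sunBlock, sunMap]

theorem isSunClass_iSup_map {V : Type*} {h k : ℕ} (φ : Fin k → Fin h ⊕ Fin h → V)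
    (hφ : Function.Bijective fun p : Fin k × (Fin h ⊕ Fin h) => φ p.1 p.2) :
    IsSunClass h (⨆ a, (sunGraph h).map (φ a)) := by
  refine ⟨k, φ, hφ.existsUnique, fun x y => ?_⟩
  simp only [iSup_adj, map_adj']
  constructor
  · rintro ⟨a, -, huw⟩
    exact ⟨a, huw⟩
  · rintro ⟨a, u, w, huw, rfl, rfl⟩
    exact ⟨a, fun h => huw.ne congr(Prod.snd $(hφ.injective (a₁ := (a, u)) (a₂ := (a, w)) h)),
      u, w, huw, rfl, rfl⟩

theorem isSunClass_sup_map {V : Type*} {h : ℕ} (f g : Fin h ⊕ Fin h → V)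
    (hfg : Function.Bijective fun p : Fin 2 × (Fin h ⊕ Fin h) => ![f, g] p.1 p.2) :
    IsSunClass h ((sunGraph h).map f ⊔ (sunGraph h).map g) := by
  convert isSunClass_iSup_map ![f, g] hfg using 1
  ext
  simp [Fin.exists_fin_two]

theorem isSunClass_sunBlock_sup {a₁ a₂ a₃ b₁ b₂ b₃ c₁ c₂ c₃ d₁ d₂ d₃ : Fin 12}
    (h : Function.Bijective fun p : Fin 2 × (Fin 3 ⊕ Fin 3) =>
      ![sunMap a₁ a₂ a₃ b₁ b₂ b₃, sunMap c₁ c₂ c₃ d₁ d₂ d₃] p.1 p.2) :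
    IsSunClass 3 (sunBlock a₁ a₂ a₃ b₁ b₂ b₃ ⊔ sunBlock c₁ c₂ c₃ d₁ d₂ d₃) := by
  rw [sunBlock_eq_map, sunBlock_eq_map]
  exact isSunClass_sup_map _ _ h

instance (a₁ a₂ a₃ b₁ b₂ b₃ : Fin 12) : DecidableRel (sunBlock a₁ a₂ a₃ b₁ b₂ b₃).Adj :=
  inferInstanceAs (DecidableRel (fromEdgeSet _).Adj)

instance Fintype.decidableExistsUnique {α : Type*} [Fintype α] (p : α → Prop)
    [DecidablePred p] : Decidable (∃! a, p a) :=
  decidable_of_iff _ (Fintype.existsUnique_iff_card_one p).symm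

def oneFactor : Fin 7 → SimpleGraph (Fin 12)
  | 0 => fromEdgeSet {s(0, 1), s(2, 3), s(4, 5), s(6, 7), s(8, 9), s(10, 11)}
  | 1 => fromEdgeSet {s(0, 2), s(1, 3), s(4, 9), s(5, 8), s(6, 11), s(7, 10)}
  | 2 => fromEdgeSet {s(0, 3), s(1, 2), s(4, 10), s(5, 11), s(6, 8), s(7, 9)}
  | 3 => fromEdgeSet {s(0, 5), s(1, 4), s(2, 7), s(3, 6), s(8, 10), s(9, 11)}
  | 4 => fromEdgeSet {s(0, 7), s(1, 6), s(2, 5), s(3, 4), s(8, 11), s(9, 10)}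
  | 5 => fromEdgeSet {s(0, 9), s(1, 8), s(2, 11), s(3, 10), s(4, 6), s(5, 7)}
  | 6 => fromEdgeSet {s(0, 11), s(1, 10), s(2, 9), s(3, 8), s(4, 7), s(5, 6)}

instance : ∀ i, DecidableRel (oneFactor i).Adj
  | 0 | 1 | 2 | 3 | 4 | 5 | 6 => inferInstanceAs (DecidableRel (fromEdgeSet _).Adj)

def urdClass : Fin 7 ⊕ Fin 2 → SimpleGraph (Fin 12)
  | .inl i => oneFactor i
  | .inr 0 => sunBlock 0 4 8 10 2 7 ⊔ sunBlock 1 5 9 11 3 6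
  | .inr 1 => sunBlock 2 6 10 8 0 5 ⊔ sunBlock 3 7 11 9 1 4

instance : ∀ i, DecidableRel (urdClass i).Adj
  | .inl i => inferInstanceAs (DecidableRel (oneFactor i).Adj)
  | .inr 0 | .inr 1 => inferInstanceAs (DecidableRel (_ ⊔ _ : SimpleGraph (Fin 12)).Adj)

theorem isMatchingClass_oneFactor : ∀ i, IsMatchingClass (oneFactor i) := by
  unfold IsMatchingClass
  decide

theorem existsUnique_urdClass_adj : ∀ x y : Fin 12, x ≠ y → ∃! i, (urdClass i).Adj x y := by
  decide

/-- There is a `(K₂, S(C₃))`-URD`(12;7,2)` whose two 3-sun classes are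
`{(0,4,8;10,2,7), (1,5,9;11,3,6)}` and `{(2,6,10;8,0,5), (3,7,11;9,1,4)}`. -/
theorem stmt_16 :
    ∃ C : Fin 7 ⊕ Fin 2 → SimpleGraph (Fin 12),
      (∀ x y : Fin 12, x ≠ y → ∃! i, (C i).Adj x y) ∧
      (∀ i : Fin 7, IsMatchingClass (C (Sum.inl i))) ∧
      (∀ j : Fin 2, IsSunClass 3 (C (Sum.inr j))) ∧
      C (Sum.inr 0) = sunBlock 0 4 8 10 2 7 ⊔ sunBlock 1 5 9 11 3 6 ∧
      C (Sum.inr 1) = sunBlock 2 6 10 8 0 5 ⊔ sunBlock 3 7 11 9 1 4 := by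
  refine ⟨urdClass, existsUnique_urdClass_adj, isMatchingClass_oneFactor, ?_, rfl, rfl⟩
  intro j
  fin_cases j
  · exact isSunClass_sunBlock_sup (by decide)
  · exact isSunClass_sunBlock_sup (by decide)
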